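/- If M ≈_P N and M →*_P fr.t₁.···.tₖ with this reduct final and fr a name not in the domain of P, then N →*_P fr.u₁.···.uₖ for some terms u₁,…,uₖ with the same head fr and same length k, and this reduct is final. -/

import Mathlib

/-- Terms of continuation calculus: names (coded as naturals) and dot. -/
inductive Tm where
  | name : ℕ → Tm
  | dot : Tm → Tm → Tm
deriving DecidableEq

/-- Right-hand sides of rules: names, variables (de Bruijn-style indices
into the left-hand side's variable list), and dot. -/
inductive Rhs where
  | name : ℕ → Rhs
  | var : ℕ → Rhs
  | dot : Rhs → Rhs → Rhs
deriving DecidableEq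

/-- A rule `n.x₁.⋯.xₖ → r`: head name, arity `k`, and right-hand side. -/
structure Rule where
  head : ℕ
  arity : ℕ
  rhs : Rhs
deriving DecidableEq

/-- A program is a finite set of rules. -/
abbrev Program := Finset Rule

/-- Variables occurring in a right-hand side. -/
def Rhs.HasVar : Rhs → ℕ → Prop
  | .name _, _ => False
  | .var w, v => w = v
  | .dot a b, v => a.HasVar v ∨ b.HasVar v

/-- Well-formedness: every variable of a right-hand side occurs in the
left-hand side, and there is at most one rule per head name. -/
def Program.Wf (P : Program) : Prop :=
  (∀ r ∈ P, ∀ v, r.rhs.HasVar v → v < r.arity) ∧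
  (∀ r₁ ∈ P, ∀ r₂ ∈ P, r₁.head = r₂.head → r₁ = r₂)

/-- `n.t₁.⋯.tₖ` : left-associated application of a term to a list of terms. -/
def Tm.apps : Tm → List Tm → Tm
  | h, [] => h
  | h, t :: ts => Tm.apps (h.dot t) ts

/-- Instantiation of a right-hand side with the terms matched by the
left-hand side variables; fails if some variable is out of range. -/
def Rhs.inst (ts : List Tm) : Rhs → Option Tm
  | .name n => some (.name n)
  | .var v => ts[v]?
  | .dot a b => do pure (.dot (← a.inst ts) (← b.inst ts))

/-- One-step evaluation `M →_P N`. -/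
def Step (P : Program) (M N : Tm) : Prop :=
  ∃ r ∈ P, ∃ ts : List Tm, ts.length = r.arity ∧
    M = Tm.apps (.name r.head) ts ∧ r.rhs.inst ts = some N

/-- Multi-step evaluation `M →*_P N`. -/
def Steps (P : Program) : Tm → Tm → Prop := Relation.ReflTransGen (Step P)

/-- `M` is final: it has no successor. -/
def Final (P : Program) (M : Tm) : Prop := ¬ ∃ N, Step P M N

/-- `M` terminates: it evaluates to a final term. -/
def Terminates (P : Program) (M : Tm) : Prop := ∃ N, Steps P M N ∧ Final P N

/-- The name `m` occurs in a term. -/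
def Tm.HasName (m : ℕ) : Tm → Prop
  | .name n => n = m
  | .dot a b => a.HasName m ∨ b.HasName m

/-- The name `m` occurs in a right-hand side. -/
def Rhs.HasName (m : ℕ) : Rhs → Prop
  | .name n => n = m
  | .var _ => False
  | .dot a b => a.HasName m ∨ b.HasName m

/-- The name `m` occurs (is mentioned) in a program. -/
def Program.HasName (P : Program) (m : ℕ) : Prop :=
  ∃ r ∈ P, r.head = m ∨ r.rhs.HasName m

/-- The name `m` is defined by the program (is the head of some rule). -/
def Program.Defines (P : Program) (m : ℕ) : Prop :=
  ∃ r ∈ P, r.head = m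

/-- Substitution of a term for a name, `M[fr := t]`. -/
def Tm.subName (m : ℕ) (t : Tm) : Tm → Tm
  | .name n => if n = m then t else .name n
  | .dot a b => .dot (Tm.subName m t a) (Tm.subName m t b)

/-- Common reduct relation `M =_P N`. -/
def CommonRed (P : Program) (M N : Tm) : Prop :=
  ∃ t, Steps P M t ∧ Steps P N t

/-- Observational equivalence `M ≈_P N`. -/
def ObsEq (P : Program) (M N : Tm) : Prop :=
  ∀ P' : Program, P'.Wf → P ⊆ P' →
    ∀ X : Tm, (Terminates P' (X.dot M) ↔ Terminates P' (X.dot N))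

/-- Renaming of names in a term. -/
def Tm.rename (f : ℕ → ℕ) : Tm → Tm
  | .name n => .name (f n)
  | .dot a b => .dot (a.rename f) (b.rename f)

/-- Renaming of names in a right-hand side. -/
def Rhs.rename (f : ℕ → ℕ) : Rhs → Rhs
  | .name n => .name (f n)
  | .var v => .var v
  | .dot a b => .dot (a.rename f) (b.rename f)

/-- Renaming of names in a rule. -/
def Rule.rename (f : ℕ → ℕ) (r : Rule) : Rule :=
  ⟨f r.head, r.arity, r.rhs.rename f⟩

/-- Renaming of names in a program. -/
def Program.rename (f : ℕ → ℕ) (P : Program) : Program :=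
  P.image (Rule.rename f)

/-- The fresh substitution `[n⃗ := m⃗]` as a function on names. -/
def renFun (ns ms : List ℕ) (n : ℕ) : ℕ :=
  ((ns.zip ms).lookup n).getD n

/-- `M` has arity `k` under `P`: `M = n.q₁.⋯.qᵢ` where `n` has a rule of
arity `i + k`. -/
def Tm.ArityIs (P : Program) (M : Tm) (k : ℕ) : Prop :=
  ∃ r ∈ P, ∃ ts : List Tm, M = Tm.apps (.name r.head) ts ∧ ts.length + k = r.arity

/-!
If `N` failed to reach a term `fr.u₁.⋯.uₖ`, extend `P` by the rules `fr.x₁.⋯.xₖ → z` and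
`z → z` for a fresh name `z`. There `M` diverges, while the `P`-normal form of `N` stays final.
This contradicts `M ≈_P N`: since well-formed programs are deterministic, the context `x.□` with
the fresh rule `x.a → a` makes `M` and `N` terminate together in every extension of `P`.
-/

namespace Tm

def head : Tm → ℕ
  | .name n => n
  | .dot a _ => a.head

def args : Tm → List Tm
  | .name _ => []
  | .dot a b => a.args ++ [b]

theorem head_apps (t : Tm) (ts : List Tm) : (t.apps ts).head = t.head := by
  induction ts generalizing t with
  | nil => rfl
  | cons u us ih => exact ih (t.dot u)

theorem args_apps (t : Tm) (ts : List Tm) : (t.apps ts).args = t.args ++ ts := by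
  induction ts generalizing t with
  | nil => simp [apps]
  | cons u us ih => simp [apps, ih (t.dot u), args]

theorem apps_name_inj {n m : ℕ} {ts us : List Tm} :
    apps (.name n) ts = apps (.name m) us ↔ n = m ∧ ts = us := by
  refine ⟨fun h => ⟨?_, ?_⟩, fun ⟨hnm, hts⟩ => hnm ▸ hts ▸ rfl⟩
  · simpa [head_apps, head] using congrArg head h
  · simpa [args_apps, args] using congrArg args h

end Tm

section Evaluation

variable {P P' : Program} {T U V : Tm}

theorem Step.unique (hP : P.Wf) (h₁ : Step P T U) (h₂ : Step P T V) : U = V := by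
  obtain ⟨r₁, hr₁, ts₁, -, rfl, hi₁⟩ := h₁
  obtain ⟨r₂, hr₂, ts₂, -, heq, hi₂⟩ := h₂
  obtain ⟨hhead, rfl⟩ := Tm.apps_name_inj.1 heq
  obtain rfl := hP.2 r₁ hr₁ r₂ hr₂ hhead
  exact Option.some.inj (hi₁.symm.trans hi₂)

theorem Step.mono (hsub : P ⊆ P') (h : Step P T U) : Step P' T U := by
  obtain ⟨r, hr, h⟩ := h
  exact ⟨r, hsub hr, h⟩

theorem Steps.mono (hsub : P ⊆ P') (h : Steps P T U) : Steps P' T U :=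
  Relation.ReflTransGen.mono (fun _ _ => Step.mono hsub) _ _ h

theorem Final.anti (hsub : P ⊆ P') (h : Final P' T) : Final P T :=
  fun ⟨U, hU⟩ => h ⟨U, hU.mono hsub⟩

theorem final_apps_of_not_defines {n : ℕ} (hn : ¬ P.Defines n) (ts : List Tm) :
    Final P (Tm.apps (.name n) ts) := by
  rintro ⟨U, r, hr, us, -, heq, -⟩
  exact hn ⟨r, hr, (Tm.apps_name_inj.1 heq).1.symm⟩

theorem final_insert {ρ : Rule} (h : Final P T)
    (hρ : ∀ ts : List Tm, ts.length = ρ.arity → T ≠ Tm.apps (.name ρ.head) ts) :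
    Final (insert ρ P) T := by
  rintro ⟨U, r, hr, ts, hlen, rfl, hinst⟩
  rcases Finset.mem_insert.1 hr with rfl | hr
  · exact hρ ts hlen rfl
  · exact h ⟨U, r, hr, ts, hlen, rfl, hinst⟩

theorem final_insert_of_head_ne {ρ : Rule} (h : Final P T) (hne : T.head ≠ ρ.head) :
    Final (insert ρ P) T :=
  final_insert h fun ts _ hT => hne (by rw [hT, Tm.head_apps]; rfl)

theorem Terminates.of_step (hP : P.Wf) (h : Terminates P T) (hTU : Step P T U) :
    Terminates P U := by
  obtain ⟨V, hTV, hV⟩ := h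
  rcases Relation.ReflTransGen.cases_head hTV with rfl | ⟨W, hTW, hWV⟩
  · exact absurd ⟨U, hTU⟩ hV
  · exact ⟨V, hTU.unique hP hTW ▸ hWV, hV⟩

theorem Terminates.of_steps (hP : P.Wf) (h : Terminates P T) (hTU : Steps P T U) :
    Terminates P U := by
  induction hTU with
  | refl => exact h
  | tail _ hstep ih => exact ih.of_step hP hstep

/-- Termination is reflected along extensions: by determinism of `P'`, the `P`-reduction of a
term is an initial segment of its `P'`-reduction. -/
theorem Terminates.of_subset (hP' : P'.Wf) (hsub : P ⊆ P') (h : Terminates P' T) :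
    Terminates P T := by
  obtain ⟨V, hTV, hV⟩ := h
  induction hTV using Relation.ReflTransGen.head_induction_on with
  | refl => exact ⟨_, .refl, hV.anti hsub⟩
  | @head T U hTU _ ih =>
    by_cases hT : Final P T
    · exact ⟨T, .refl, hT⟩
    obtain ⟨U', hTU'⟩ := not_not.1 hT
    obtain rfl := (hTU'.mono hsub).unique hP' hTU
    obtain ⟨W, hUW, hW⟩ := ih
    exact ⟨W, .head hTU' hUW, hW⟩

theorem not_terminates_of_step_self (hP : P.Wf) (hT : Step P T T) : ¬ Terminates P T := by
  have hstuck (V : Tm) (hTV : Steps P T V) : V = T := by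
    induction hTV with
    | refl => rfl
    | tail _ hstep ih =>
      subst ih
      exact hstep.unique hP hT
  rintro ⟨V, hTV, hV⟩
  exact hV ⟨T, hstuck V hTV ▸ hT⟩

end Evaluation

namespace Program

theorem defines_insert {P : Program} {ρ : Rule} {n : ℕ} :
    (insert ρ P).Defines n ↔ ρ.head = n ∨ P.Defines n := by
  simp [Defines]

theorem exists_fresh (P : Program) (s : Finset ℕ) : ∃ x ∉ s, ¬ P.Defines x := by
  obtain ⟨x, hx⟩ := Infinite.exists_notMem_finset (s ∪ P.image Rule.head)
  simp only [Finset.mem_union, Finset.mem_image, not_or] at hx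
  exact ⟨x, hx.1, fun ⟨r, hr, hrx⟩ => hx.2 ⟨r, hr, hrx⟩⟩

theorem Wf.insert {P : Program} {ρ : Rule} (hP : P.Wf)
    (hvar : ∀ v, ρ.rhs.HasVar v → v < ρ.arity) (hfresh : ¬ P.Defines ρ.head) :
    (insert ρ P).Wf := by
  refine ⟨fun r hr => ?_, fun r₁ h₁ r₂ h₂ hh => ?_⟩
  · rcases Finset.mem_insert.1 hr with rfl | hr
    · exact hvar
    · exact hP.1 r hr
  · rcases Finset.mem_insert.1 h₁ with rfl | hr₁ <;> rcases Finset.mem_insert.1 h₂ with rfl | hr₂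
    · rfl
    · exact absurd ⟨r₂, hr₂, hh.symm⟩ hfresh
    · exact absurd ⟨r₁, hr₁, hh⟩ hfresh
    · exact hP.2 r₁ hr₁ r₂ hr₂ hh

end Program

namespace ObsEq

variable {P P' : Program} {M N : Tm}

theorem symm (h : ObsEq P M N) : ObsEq P N M :=
  fun P' hP' hsub X => (h P' hP' hsub X).symm

theorem terminates (h : ObsEq P M N) (hP' : P'.Wf) (hsub : P ⊆ P') (hM : Terminates P' M) :
    Terminates P' N := by
  obtain ⟨V, hMV, hV⟩ := hM
  obtain ⟨x, hxV, hx⟩ := P'.exists_fresh {V.head}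
  set idRule : Rule := ⟨x, 1, .var 0⟩
  have hwf : (insert idRule P').Wf := hP'.insert (by rintro v rfl; exact Nat.zero_lt_one) hx
  have hext : P' ⊆ insert idRule P' := Finset.subset_insert _ _
  have hstep (T : Tm) : Step (insert idRule P') ((Tm.name x).dot T) T :=
    ⟨idRule, Finset.mem_insert_self _ _, [T], rfl, rfl, rfl⟩
  have hVx : V.head ≠ x := Ne.symm (by simpa using hxV)
  have hxM : Terminates (insert idRule P') ((Tm.name x).dot M) :=
    ⟨V, .head (hstep M) (hMV.mono hext), final_insert_of_head_ne hV hVx⟩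
  have hxN := (h _ hwf (hsub.trans hext) (.name x)).1 hxM
  exact (hxN.of_step hwf (hstep N)).of_subset hwf hext

theorem terminates_iff (h : ObsEq P M N) (hP' : P'.Wf) (hsub : P ⊆ P') :
    Terminates P' M ↔ Terminates P' N :=
  ⟨h.terminates hP' hsub, h.symm.terminates hP' hsub⟩

end ObsEq

theorem obsEq_then_reaches_same_name_general (P : Program) (hP : P.Wf) (M N : Tm)
    (fr : ℕ) (ts : List Tm) (heq : ObsEq P M N)
    (hred : Steps P M (Tm.apps (.name fr) ts))
    (hfr : ¬ P.Defines fr) :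
    ∃ us : List Tm, us.length = ts.length ∧
      Steps P N (Tm.apps (.name fr) us) ∧
      Final P (Tm.apps (.name fr) us) := by
  obtain ⟨V, hNV, hV⟩ :=
    heq.terminates hP subset_rfl ⟨_, hred, final_apps_of_not_defines hfr ts⟩
  by_contra hne
  have hshape (us : List Tm) (hlen : us.length = ts.length) : V ≠ Tm.apps (.name fr) us := by
    rintro rfl
    exact hne ⟨us, hlen, hNV, hV⟩
  obtain ⟨z, hz, hzP⟩ := P.exists_fresh {fr, V.head}
  simp only [Finset.mem_insert, Finset.mem_singleton, not_or] at hz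
  set loop : Rule := ⟨z, 0, .name z⟩
  set redirect : Rule := ⟨fr, ts.length, .name z⟩
  set P₂ : Program := insert redirect (insert loop P)
  have hsub : P ⊆ P₂ := (Finset.subset_insert _ _).trans (Finset.subset_insert _ _)
  have hwf : P₂.Wf := (hP.insert (ρ := loop) nofun hzP).insert (ρ := redirect) nofun
    (Program.defines_insert.not.2 (not_or.2 ⟨hz.1, hfr⟩))
  have hloop : Step P₂ (.name z) (.name z) :=
    ⟨loop, Finset.mem_insert_of_mem (Finset.mem_insert_self _ _), [], rfl, rfl, rfl⟩
  have hMz : Steps P₂ M (.name z) :=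
    (hred.mono hsub).tail ⟨redirect, Finset.mem_insert_self _ _, ts, rfl, rfl, rfl⟩
  have hVfin : Final P₂ V := final_insert (final_insert_of_head_ne hV (Ne.symm hz.2)) hshape
  exact not_terminates_of_step_self hwf hloop <|
    ((heq.terminates_iff hwf hsub).2 ⟨V, hNV.mono hsub, hVfin⟩).of_steps hwf hMz

theorem obsEq_then_reaches_same_name (P : Program) (hP : P.Wf) (M N : Tm)
    (fr : ℕ) (ts : List Tm) (heq : ObsEq P M N)
    (hred : Steps P M (Tm.apps (.name fr) ts))
    (hfin : Final P (Tm.apps (.name fr) ts)) (hfr : ¬ P.Defines fr) :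
    ∃ us : List Tm, us.length = ts.length ∧
      Steps P N (Tm.apps (.name fr) us) ∧
      Final P (Tm.apps (.name fr) us) :=
  obsEq_then_reaches_same_name_general P hP M N fr ts heq hred hfr
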